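/- The sample mean problem is a discrete optimization problem over representative tuples: min_{y ∈ ℝ^n} (1/2) Σ_{i=1}^N D(y, xᵢ)² = min_{(g₁,…,g_N) ∈ G^N} (1/2) Σ_{i=1}^N ‖gᵢ xᵢ − m(g)‖², where m(g) = (1/N) Σ_{i=1}^N gᵢ xᵢ is the arithmetic mean of the chosen representatives. In particular the minimum of F is attained at the arithmetic mean of some tuple of representatives from the G-orbits of x₁, …, x_N. -/

import Mathlib

/-!
Splitting `‖vᵢ - y‖² = ‖vᵢ - m‖² + 2⟪vᵢ - m, m - y⟫ + ‖m - y‖²` around the arithmetic mean `m`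
shows that `m` minimizes `∑ᵢ ‖vᵢ - y‖²`. For every `y`, choosing for each `i` a representative
`gᵢ xᵢ` nearest to `y` turns `F(y)` into `½ ∑ᵢ ‖gᵢ xᵢ - y‖²`, which is therefore at least the
discrete objective `½ ∑ᵢ ‖gᵢ xᵢ - m(g)‖²`. Conversely `F(m(g)) ≤ ½ ∑ᵢ ‖gᵢ xᵢ - m(g)‖²`, so a
tuple `g` minimizing the (finite) discrete problem gives a minimizer `m(g)` of `F`.
-/

open scoped BigOperators RealInnerProductSpace

noncomputable def grDist {n : ℕ}
    (G : Subgroup (EuclideanSpace ℝ (Fin n) ≃ₗᵢ[ℝ] EuclideanSpace ℝ (Fin n))) [Fintype G]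
    (x y : EuclideanSpace ℝ (Fin n)) : ℝ :=
  Finset.univ.inf' Finset.univ_nonempty fun g : G => ‖g.val x - y‖

section Mean

variable {E ι : Type*} [NormedAddCommGroup E] [InnerProductSpace ℝ E] [Fintype ι]

theorem sum_sub_mean_eq_zero (v : ι → E) :
    ∑ i, (v i - (Fintype.card ι : ℝ)⁻¹ • ∑ j, v j) = 0 := by
  rcases isEmpty_or_nonempty ι with hι | hι
  · simp
  have hcard : (Fintype.card ι : ℝ) ≠ 0 := Nat.cast_ne_zero.mpr Fintype.card_ne_zero
  rw [Finset.sum_sub_distrib, Finset.sum_const, Finset.card_univ, ← Nat.cast_smul_eq_nsmul ℝ,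
    smul_smul, mul_inv_cancel₀ hcard, one_smul, sub_self]

theorem sum_norm_sub_sq_eq_sum_norm_sub_mean_sq_add (v : ι → E) (y : E) :
    ∑ i, ‖v i - y‖ ^ 2 =
      ∑ i, ‖v i - (Fintype.card ι : ℝ)⁻¹ • ∑ j, v j‖ ^ 2 +
        Fintype.card ι * ‖(Fintype.card ι : ℝ)⁻¹ • ∑ j, v j - y‖ ^ 2 := by
  set m := (Fintype.card ι : ℝ)⁻¹ • ∑ j, v j
  have hsplit : ∀ i, ‖v i - y‖ ^ 2 = ‖v i - m‖ ^ 2 + 2 * ⟪v i - m, m - y⟫ + ‖m - y‖ ^ 2 := by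
    intro i
    rw [← norm_add_sq_real, sub_add_sub_cancel]
  have hm : ∑ i, (v i - m) = 0 := sum_sub_mean_eq_zero v
  simp only [hsplit, Finset.sum_add_distrib, ← Finset.mul_sum, ← sum_inner, hm, inner_zero_left,
    mul_zero, add_zero, Finset.sum_const, Finset.card_univ, nsmul_eq_mul]

theorem sum_norm_sub_mean_sq_le (v : ι → E) (y : E) :
    ∑ i, ‖v i - (Fintype.card ι : ℝ)⁻¹ • ∑ j, v j‖ ^ 2 ≤ ∑ i, ‖v i - y‖ ^ 2 := by
  rw [sum_norm_sub_sq_eq_sum_norm_sub_mean_sq_add v y]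
  exact le_add_of_nonneg_right (by positivity)

end Mean

section GrDist

variable {n : ℕ} {G : Subgroup (EuclideanSpace ℝ (Fin n) ≃ₗᵢ[ℝ] EuclideanSpace ℝ (Fin n))}
  [Fintype G]

theorem grDist_le (g : G) (x y : EuclideanSpace ℝ (Fin n)) : grDist G x y ≤ ‖g.val x - y‖ :=
  Finset.inf'_le _ (Finset.mem_univ g)

theorem grDist_nonneg (x y : EuclideanSpace ℝ (Fin n)) : 0 ≤ grDist G x y :=
  Finset.le_inf' _ _ fun _ _ => norm_nonneg _

theorem exists_grDist_eq (x y : EuclideanSpace ℝ (Fin n)) :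
    ∃ g : G, grDist G x y = ‖g.val x - y‖ := by
  obtain ⟨g, -, hg⟩ := Finset.exists_mem_eq_inf' Finset.univ_nonempty fun g : G => ‖g.val x - y‖
  exact ⟨g, hg⟩

theorem grDist_le_grDist_swap (x y : EuclideanSpace ℝ (Fin n)) : grDist G x y ≤ grDist G y x := by
  obtain ⟨g, hg⟩ := exists_grDist_eq (G := G) y x
  have hinv : ‖(g⁻¹ : G).val x - y‖ = ‖g.val y - x‖ := by
    rw [← LinearIsometryEquiv.norm_map g.val, map_sub, norm_sub_rev]
    simp
  exact hg ▸ hinv ▸ grDist_le g⁻¹ x y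

theorem grDist_comm (x y : EuclideanSpace ℝ (Fin n)) : grDist G x y = grDist G y x :=
  (grDist_le_grDist_swap x y).antisymm (grDist_le_grDist_swap y x)

variable {ι : Type*} [Fintype ι]

theorem sum_grDist_sq_le (x : ι → EuclideanSpace ℝ (Fin n)) (g : ι → G)
    (y : EuclideanSpace ℝ (Fin n)) :
    ∑ i, grDist G y (x i) ^ 2 ≤ ∑ i, ‖(g i).val (x i) - y‖ ^ 2 := by
  gcongr with i
  · exact grDist_nonneg (G := G) _ _
  · exact (grDist_comm y (x i)).trans_le (grDist_le (g i) (x i) y)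

theorem exists_sum_grDist_sq_eq (x : ι → EuclideanSpace ℝ (Fin n))
    (y : EuclideanSpace ℝ (Fin n)) :
    ∃ g : ι → G, ∑ i, grDist G y (x i) ^ 2 = ∑ i, ‖(g i).val (x i) - y‖ ^ 2 := by
  choose g hg using fun i => exists_grDist_eq (G := G) (x i) y
  exact ⟨g, by simp only [grDist_comm y, hg]⟩

end GrDist

theorem sample_mean_discrete_optimization_general {n : ℕ}
    (G : Subgroup (EuclideanSpace ℝ (Fin n) ≃ₗᵢ[ℝ] EuclideanSpace ℝ (Fin n))) [Fintype G]
    (N : ℕ) (x : Fin N → EuclideanSpace ℝ (Fin n)) :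
    ∃ g : Fin N → G,
      (∀ y : EuclideanSpace ℝ (Fin n),
        (1 / 2 : ℝ) * ∑ i, grDist G ((N : ℝ)⁻¹ • ∑ j, (g j).val (x j)) (x i) ^ 2 ≤
          (1 / 2 : ℝ) * ∑ i, grDist G y (x i) ^ 2) ∧
      ((1 / 2 : ℝ) * ∑ i, grDist G ((N : ℝ)⁻¹ • ∑ j, (g j).val (x j)) (x i) ^ 2 =
        (1 / 2 : ℝ) * ∑ i, ‖(g i).val (x i) - (N : ℝ)⁻¹ • ∑ j, (g j).val (x j)‖ ^ 2) ∧
      (∀ g' : Fin N → G,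
        (1 / 2 : ℝ) * ∑ i, grDist G ((N : ℝ)⁻¹ • ∑ j, (g j).val (x j)) (x i) ^ 2 ≤
          (1 / 2 : ℝ) * ∑ i, ‖(g' i).val (x i) - (N : ℝ)⁻¹ • ∑ j, (g' j).val (x j)‖ ^ 2) := by
  let mean : (Fin N → G) → EuclideanSpace ℝ (Fin n) := fun g => (N : ℝ)⁻¹ • ∑ j, (g j).val (x j)
  let cost : (Fin N → G) → ℝ := fun g => ∑ i, ‖(g i).val (x i) - mean g‖ ^ 2
  obtain ⟨g, hg⟩ := Finite.exists_min cost
  have cost_le : ∀ y, cost g ≤ ∑ i, grDist G y (x i) ^ 2 := fun y => by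
    obtain ⟨h, hh⟩ := exists_sum_grDist_sq_eq (G := G) x y
    have hmean := sum_norm_sub_mean_sq_le (fun i => (h i).val (x i)) y
    rw [Fintype.card_fin] at hmean
    exact hh ▸ (hg h).trans hmean
  have cost_eq : ∑ i, grDist G (mean g) (x i) ^ 2 = cost g :=
    (sum_grDist_sq_le x g (mean g)).antisymm (cost_le (mean g))
  refine ⟨g, fun y => ?_, ?_, fun g' => ?_⟩
  · exact mul_le_mul_of_nonneg_left (cost_eq ▸ cost_le y) (by norm_num)
  · exact congrArg _ cost_eq
  · exact mul_le_mul_of_nonneg_left (cost_eq ▸ hg g') (by norm_num)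

/-- the sample-mean problem is a discrete optimization problem over tuples of
representatives: `min_y F(y) = min_{(g₁,…,g_N) ∈ G^N} (1/2) Σᵢ ‖gᵢ xᵢ − m(g)‖²`, where
`m(g) = (1/N) Σᵢ gᵢ xᵢ`; in particular, the minimum of `F` is attained at the arithmetic
mean of some tuple of representatives from the `G`-orbits of the sample points. -/
theorem sample_mean_discrete_optimization {n : ℕ}
    (G : Subgroup (EuclideanSpace ℝ (Fin n) ≃ₗᵢ[ℝ] EuclideanSpace ℝ (Fin n))) [Fintype G]
    (N : ℕ) (hN : 0 < N) (x : Fin N → EuclideanSpace ℝ (Fin n)) :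
    ∃ g : Fin N → G,
      (∀ y : EuclideanSpace ℝ (Fin n),
        (1 / 2 : ℝ) * ∑ i, grDist G ((N : ℝ)⁻¹ • ∑ j, (g j).val (x j)) (x i) ^ 2 ≤
          (1 / 2 : ℝ) * ∑ i, grDist G y (x i) ^ 2) ∧
      ((1 / 2 : ℝ) * ∑ i, grDist G ((N : ℝ)⁻¹ • ∑ j, (g j).val (x j)) (x i) ^ 2 =
        (1 / 2 : ℝ) * ∑ i, ‖(g i).val (x i) - (N : ℝ)⁻¹ • ∑ j, (g j).val (x j)‖ ^ 2) ∧
      (∀ g' : Fin N → G,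
        (1 / 2 : ℝ) * ∑ i, grDist G ((N : ℝ)⁻¹ • ∑ j, (g j).val (x j)) (x i) ^ 2 ≤
          (1 / 2 : ℝ) * ∑ i, ‖(g' i).val (x i) - (N : ℝ)⁻¹ • ∑ j, (g' j).val (x j)‖ ^ 2) :=
  sample_mean_discrete_optimization_general G N x
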